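/- Let Λ = KQ/⟨I⟩ be a gentle algebra over an algebraically closed field K such that Q has no loop. If every indecomposable Λ-module is uniquely determined (up to isomorphism) by its dimension vector, then for any arrow α ∈ Q_1 there is no arrow from t(α) to s(α); that is, Q has no oriented 2-cycle. -/

import Mathlib

/-! # Preliminary definitions: quivers, bound quiver algebras, gentle algebras,
Gorenstein projective modules, Cohen-Macaulay Auslander algebras -/

/-- A finite quiver: finite sets of vertices and arrows with source and target maps. -/
structure QuiverData : Type 1 where
  V : Type
  A : Type
  [finV : Finite V]
  [finA : Finite A]
  s : A → V
  t : A → V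

attribute [instance] QuiverData.finV QuiverData.finA

namespace QuiverData

/-- A list of arrows `[a₁, …, aₙ]` is composable (as the path `a₁a₂⋯aₙ`, where `aₙ` is
applied first and `a₁` last) if `s(aᵢ) = t(aᵢ₊₁)` for consecutive arrows. -/
def Composable (Q : QuiverData) (l : List Q.A) : Prop :=
  l.Chain' (fun a b => Q.s a = Q.t b)

/-- The quiver is connected: any two vertices are linked by a chain of arrows
(in either direction). -/
def IsConnected (Q : QuiverData) : Prop :=
  ∀ v w : Q.V, Relation.ReflTransGen
    (fun x y => ∃ a : Q.A, (Q.s a = x ∧ Q.t a = y) ∨ (Q.s a = y ∧ Q.t a = x)) v w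

end QuiverData

/-- The defining relations of the bound quiver algebra `KQ/⟨I⟩` inside the free algebra on
vertices and arrows: the trivial paths `e_v` are orthogonal idempotents summing to `1`,
arrows are compatible with their endpoints, and the relation paths in `I` vanish. -/
inductive BQRel (K : Type) [CommRing K] (Q : QuiverData) (I : Set (List Q.A)) :
    FreeAlgebra K (Q.V ⊕ Q.A) → FreeAlgebra K (Q.V ⊕ Q.A) → Prop
  | vert_mul_self (v : Q.V) :
      BQRel K Q I (FreeAlgebra.ι K (Sum.inl v) * FreeAlgebra.ι K (Sum.inl v))
        (FreeAlgebra.ι K (Sum.inl v))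
  | vert_mul_vert (v w : Q.V) (h : v ≠ w) :
      BQRel K Q I (FreeAlgebra.ι K (Sum.inl v) * FreeAlgebra.ι K (Sum.inl w)) 0
  | sum_vert : BQRel K Q I (∑ᶠ v : Q.V, FreeAlgebra.ι K (Sum.inl v)) 1
  | arr_tgt (a : Q.A) :
      BQRel K Q I (FreeAlgebra.ι K (Sum.inl (Q.t a)) * FreeAlgebra.ι K (Sum.inr a))
        (FreeAlgebra.ι K (Sum.inr a))
  | arr_src (a : Q.A) :
      BQRel K Q I (FreeAlgebra.ι K (Sum.inr a) * FreeAlgebra.ι K (Sum.inl (Q.s a)))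
        (FreeAlgebra.ι K (Sum.inr a))
  | rel (p : List Q.A) (hp : p ∈ I) :
      BQRel K Q I ((p.map (fun a => FreeAlgebra.ι K (Sum.inr a))).prod) 0

/-- The bound quiver algebra `KQ/⟨I⟩`. -/
abbrev BoundQuiverAlgebra (K : Type) [CommRing K] (Q : QuiverData) (I : Set (List Q.A)) :
    Type :=
  RingQuot (BQRel K Q I)

section BQA

variable (K : Type) [CommRing K] (Q : QuiverData) (I : Set (List Q.A))

/-- The idempotent of the bound quiver algebra corresponding to a vertex. -/
noncomputable def vertEl (v : Q.V) : BoundQuiverAlgebra K Q I :=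
  RingQuot.mkAlgHom K (BQRel K Q I) (FreeAlgebra.ι K (Sum.inl v))

/-- The element of the bound quiver algebra corresponding to an arrow. -/
noncomputable def arrEl (a : Q.A) : BoundQuiverAlgebra K Q I :=
  RingQuot.mkAlgHom K (BQRel K Q I) (FreeAlgebra.ι K (Sum.inr a))

theorem arrEl_mul_vertEl (a : Q.A) :
    arrEl K Q I a * vertEl K Q I (Q.s a) = arrEl K Q I a := by
  rw [arrEl, vertEl, ← map_mul]
  exact RingQuot.mkAlgHom_rel K (BQRel.arr_src a)

theorem vertEl_mul_arrEl (a : Q.A) :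
    vertEl K Q I (Q.t a) * arrEl K Q I a = arrEl K Q I a := by
  rw [arrEl, vertEl, ← map_mul]
  exact RingQuot.mkAlgHom_rel K (BQRel.arr_tgt a)

end BQA

/-- A bound quiver `(Q, I)` is gentle. -/
structure IsGentle (Q : QuiverData) (I : Set (List Q.A)) : Prop where
  /-- relations are composable paths of length two -/
  rel_length_two : ∀ p ∈ I, p.length = 2 ∧ Q.Composable p
  /-- each vertex is the starting point of at most two arrows -/
  start_le_two : ∀ v : Q.V, {a : Q.A | Q.s a = v}.ncard ≤ 2
  /-- each vertex is the ending point of at most two arrows -/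
  target_le_two : ∀ v : Q.V, {a : Q.A | Q.t a = v}.ncard ≤ 2
  /-- for each arrow `α` there is at most one arrow `β` with `t β = s α` and `αβ ∉ I` -/
  unique_comp_notmem : ∀ α : Q.A, {β : Q.A | Q.t β = Q.s α ∧ [α, β] ∉ I}.Subsingleton
  /-- for each arrow `α` there is at most one arrow `γ` with `s γ = t α` and `γα ∉ I` -/
  unique_comp_notmem' : ∀ α : Q.A, {γ : Q.A | Q.s γ = Q.t α ∧ [γ, α] ∉ I}.Subsingleton
  /-- for each arrow `α` there is at most one arrow `β` with `t β = s α` and `αβ ∈ I` -/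
  unique_comp_mem : ∀ α : Q.A, {β : Q.A | Q.t β = Q.s α ∧ [α, β] ∈ I}.Subsingleton
  /-- for each arrow `α` there is at most one arrow `γ` with `s γ = t α` and `γα ∈ I` -/
  unique_comp_mem' : ∀ α : Q.A, {γ : Q.A | Q.s γ = Q.t α ∧ [γ, α] ∈ I}.Subsingleton

/-- A `K`-algebra is a gentle algebra if it is isomorphic to the bound quiver algebra of a
gentle bound quiver (with finite-dimensional quotient). -/
def IsGentleAlgebra (K : Type) [Field K] (A : Type) [Ring A] [Algebra K A] : Prop :=
  ∃ (Q : QuiverData) (I : Set (List Q.A)), IsGentle Q I ∧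
    FiniteDimensional K (BoundQuiverAlgebra K Q I) ∧
    Nonempty (A ≃ₐ[K] BoundQuiverAlgebra K Q I)

section SMulComm

variable (K : Type) [CommRing K] (Λ : Type) [Ring Λ] [Algebra K Λ]
variable (M : Type) [AddCommGroup M] [Module Λ M] [Module K M] [IsScalarTower K Λ M]

instance (priority := 100) smulCommClass_of_isScalarTower' : SMulCommClass Λ K M :=
  ⟨fun a k m => by
    rw [← algebraMap_smul Λ k m, ← mul_smul, ← Algebra.commutes, mul_smul, algebraMap_smul]⟩

end SMulComm

/-! ## Gorenstein projective modules -/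

/-- A module is indecomposable if it is nontrivial and its only idempotent endomorphisms
are `0` and `1`. -/
def IsIndecomposableModule (Λ : Type) [Ring Λ] (M : Type) [AddCommGroup M] [Module Λ M] :
    Prop :=
  Nontrivial M ∧ ∀ e : M →ₗ[Λ] M, e ∘ₗ e = e → e = 0 ∨ e = LinearMap.id

/-- A module `G` is Gorenstein projective if there is an exact complex of finitely
generated projective modules which stays exact under `Hom_Λ(-, Λ)` and whose kernel in
degree `0` is isomorphic to `G`. -/
def IsGorensteinProjective (Λ : Type) [Ring Λ] (G : Type) [AddCommGroup G] [Module Λ G] :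
    Prop :=
  ∃ (P : ℤ → ModuleCat.{0} Λ) (d : ∀ i : ℤ, P i →ₗ[Λ] P (i + 1)),
    (∀ i, Module.Finite Λ (P i)) ∧
    (∀ i, Module.Projective Λ (P i)) ∧
    (∀ i, LinearMap.range (d i) = LinearMap.ker (d (i + 1))) ∧
    (∀ (i : ℤ) (f : P (i + 1) →ₗ[Λ] Λ),
      f ∘ₗ d i = 0 ↔ ∃ g : P (i + 1 + 1) →ₗ[Λ] Λ, f = g ∘ₗ d (i + 1)) ∧
    Nonempty (G ≃ₗ[Λ] LinearMap.ker (d 0))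

/-- An algebra is CM-finite if there are only finitely many isomorphism classes of
indecomposable finitely generated Gorenstein projective modules. -/
def IsCMFinite (Λ : Type) [Ring Λ] : Prop :=
  ∃ (n : ℕ) (E : Fin n → ModuleCat.{0} Λ),
    ∀ G : ModuleCat.{0} Λ, Module.Finite Λ G → IsGorensteinProjective Λ G →
      IsIndecomposableModule Λ G → ∃ i, Nonempty (G ≃ₗ[Λ] E i)

/-- An algebra is representation finite if there are only finitely many isomorphism classes
of indecomposable finitely generated modules. -/
def IsRepFinite (Λ : Type) [Ring Λ] : Prop :=
  ∃ (n : ℕ) (M : Fin n → ModuleCat.{0} Λ),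
    ∀ N : ModuleCat.{0} Λ, Module.Finite Λ N → IsIndecomposableModule Λ N →
      ∃ i, Nonempty (N ≃ₗ[Λ] M i)

/-- A complete family of representatives of the isomorphism classes of indecomposable
finitely generated Gorenstein projective modules. -/
structure IsGProjReps (Λ : Type) [Ring Λ] {n : ℕ} (E : Fin n → ModuleCat.{0} Λ) : Prop where
  finite : ∀ i, Module.Finite Λ (E i)
  gproj : ∀ i, IsGorensteinProjective Λ (E i)
  indec : ∀ i, IsIndecomposableModule Λ (E i)
  noniso : ∀ i j, i ≠ j → IsEmpty ((E i) ≃ₗ[Λ] (E j))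
  complete : ∀ G : ModuleCat.{0} Λ, Module.Finite Λ G → IsGorensteinProjective Λ G →
    IsIndecomposableModule Λ G → ∃ i, Nonempty (G ≃ₗ[Λ] E i)

/-- The Cohen-Macaulay Auslander algebra `End_Λ(E₁ ⊕ ⋯ ⊕ Eₙ)ᵒᵖ` associated to a family of
representatives of the indecomposable Gorenstein projective modules. -/
abbrev CMAuslanderAlgebra (Λ : Type) [Ring Λ] {n : ℕ} (E : Fin n → ModuleCat.{0} Λ) : Type :=
  (Module.End Λ (∀ i, E i))ᵐᵒᵖ

/-! ## Indecomposable projectives `P_v`, radical summands `R(α)`, dimension vectors -/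

section Modules

variable (K : Type) [CommRing K] (Q : QuiverData) (I : Set (List Q.A))

/-- The indecomposable projective module `P_v = Λ e_v` of the bound quiver algebra,
as a left submodule of the regular module. -/
noncomputable def Pmod (v : Q.V) :
    Submodule (BoundQuiverAlgebra K Q I) (BoundQuiverAlgebra K Q I) :=
  LinearMap.range (LinearMap.toSpanSingleton (BoundQuiverAlgebra K Q I)
    (BoundQuiverAlgebra K Q I) (vertEl K Q I v))

/-- The left ideal `R(α) = Λ α` generated by an arrow `α`. -/
noncomputable def Rmod (a : Q.A) :
    Submodule (BoundQuiverAlgebra K Q I) (BoundQuiverAlgebra K Q I) :=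
  LinearMap.range (LinearMap.toSpanSingleton (BoundQuiverAlgebra K Q I)
    (BoundQuiverAlgebra K Q I) (arrEl K Q I a))

theorem Rmod_le_Pmod (a : Q.A) : Rmod K Q I a ≤ Pmod K Q I (Q.s a) := by
  rintro x ⟨y, rfl⟩
  refine ⟨y * arrEl K Q I a, ?_⟩
  simp only [LinearMap.toSpanSingleton_apply, smul_eq_mul, mul_assoc, arrEl_mul_vertEl]

/-- Right multiplication by the arrow `α`, as a map `P_{t(α)} → R(α)`. -/
noncomputable def multMap (a : Q.A) :
    ↥(Pmod K Q I (Q.t a)) →ₗ[BoundQuiverAlgebra K Q I] ↥(Rmod K Q I a) :=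
  (LinearMap.toSpanSingleton (BoundQuiverAlgebra K Q I) (BoundQuiverAlgebra K Q I)
    (arrEl K Q I a)).restrict (fun x _ => ⟨x, rfl⟩)

/-- The entry at the vertex `v` of the dimension vector of a module over a bound quiver
algebra: `dim_K (e_v M)`. -/
noncomputable def dimVecEntry (M : Type) [AddCommGroup M]
    [Module (BoundQuiverAlgebra K Q I) M] (v : Q.V) : ℕ :=
  Module.finrank K (LinearMap.range
    (RestrictScalars.lsmul K (BoundQuiverAlgebra K Q I) M (vertEl K Q I v)))

/-- The dimension vector of a module over a bound quiver algebra. -/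
noncomputable def dimVec (M : Type) [AddCommGroup M]
    [Module (BoundQuiverAlgebra K Q I) M] : Q.V → ℕ :=
  fun v => dimVecEntry K Q I M v

/-- Every indecomposable finitely generated module over `KQ/⟨I⟩` is determined up to
isomorphism by its dimension vector. -/
def DetByDimVec : Prop :=
  ∀ M N : ModuleCat.{0} (BoundQuiverAlgebra K Q I),
    Module.Finite (BoundQuiverAlgebra K Q I) M →
    Module.Finite (BoundQuiverAlgebra K Q I) N →
    IsIndecomposableModule (BoundQuiverAlgebra K Q I) M →
    IsIndecomposableModule (BoundQuiverAlgebra K Q I) N →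
    dimVec K Q I M = dimVec K Q I N →
    Nonempty (M ≃ₗ[BoundQuiverAlgebra K Q I] N)

/-! ## Cycles of relations and the Auslander bound quiver `(Q^Aus, I^Aus)` -/

/-- A repetition-free cyclic path `α₁ ⋯ αₙ` (given as the list `[α₁, …, αₙ]`) with
`αᵢαᵢ₊₁ ∈ I` for all `i` (indices mod `n`); these are the elements of `𝒞(Λ)`. -/
def IsRelCycle (l : List Q.A) : Prop :=
  l ≠ [] ∧ l.Nodup ∧
    ∀ i : Fin l.length, [l.get i, l.get ⟨(i + 1) % l.length, Nat.mod_lt _ i.pos⟩] ∈ I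

/-- An arrow is cyclic if it lies on some cycle in `𝒞(Λ)`. -/
def IsCyclicArrow (a : Q.A) : Prop := ∃ l : List Q.A, IsRelCycle Q I l ∧ a ∈ l

/-- The quiver `Q^Aus` of the Cohen-Macaulay Auslander algebra: the vertices are the
vertices of `Q` together with the cyclic arrows of `Q`; the arrows are the non-cyclic
arrows of `Q` together with, for each cyclic arrow `α`, arrows `α⁺ : s(α) → α` and
`α⁻ : α → t(α)`. -/
def ausQuiver : QuiverData where
  V := Q.V ⊕ {a : Q.A // IsCyclicArrow Q I a}
  A := {a : Q.A // ¬ IsCyclicArrow Q I a} ⊕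
    ({a : Q.A // IsCyclicArrow Q I a} ⊕ {a : Q.A // IsCyclicArrow Q I a})
  s := fun x => match x with
    | Sum.inl a => Sum.inl (Q.s a.1)
    | Sum.inr (Sum.inl a) => Sum.inl (Q.s a.1)   -- α⁺ : s(α) → α
    | Sum.inr (Sum.inr a) => Sum.inr a           -- α⁻ : α → t(α)
  t := fun x => match x with
    | Sum.inl a => Sum.inl (Q.t a.1)
    | Sum.inr (Sum.inl a) => Sum.inr a
    | Sum.inr (Sum.inr a) => Sum.inl (Q.t a.1)

/-- The relations `I^Aus` of the Cohen-Macaulay Auslander algebra: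
`β⁺α⁻` for `βα ∈ I` with `α, β` cyclic, and `βα` for `βα ∈ I` with `α, β` non-cyclic. -/
def ausRels : Set (List (ausQuiver Q I).A) :=
  {p | ∃ (β α : Q.A) (hβ : IsCyclicArrow Q I β) (hα : IsCyclicArrow Q I α),
      [β, α] ∈ I ∧ p = [Sum.inr (Sum.inl ⟨β, hβ⟩), Sum.inr (Sum.inr ⟨α, hα⟩)]} ∪
  {p | ∃ (β α : Q.A) (hβ : ¬ IsCyclicArrow Q I β) (hα : ¬ IsCyclicArrow Q I α),
      [β, α] ∈ I ∧ p = [Sum.inl ⟨β, hβ⟩, Sum.inl ⟨α, hα⟩]}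

end Modules

/-! ## Strings and bands -/

/-- A letter: an arrow (`Sum.inl`) or the formal inverse of an arrow (`Sum.inr`). -/
def Letter (Q : QuiverData) : Type := Q.A ⊕ Q.A

namespace Letter

variable {Q : QuiverData}

def src : Letter Q → Q.V
  | Sum.inl a => Q.s a
  | Sum.inr a => Q.t a

def tgt : Letter Q → Q.V
  | Sum.inl a => Q.t a
  | Sum.inr a => Q.s a

def inv : Letter Q → Letter Q
  | Sum.inl a => Sum.inr a
  | Sum.inr a => Sum.inl a

end Letter

/-- The formal inverse of a word of letters. -/
def invWord {Q : QuiverData} (w : List (Letter Q)) : List (Letter Q) :=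
  (w.map Letter.inv).reverse

section Strings

variable (Q : QuiverData) (I : Set (List Q.A))

/-- A string for the bound quiver `(Q, I)`: a nonempty word `c₁c₂⋯cₙ` in arrows and their
formal inverses with `s(cᵢ) = t(cᵢ₊₁)`, `cᵢ₊₁ ≠ cᵢ⁻¹`, such that no subword nor the inverse
of a subword lies in `I`. -/
def IsString (w : List (Letter Q)) : Prop :=
  w ≠ [] ∧
  w.Chain' (fun c d => c.src = d.tgt) ∧
  w.Chain' (fun c d => d ≠ c.inv) ∧
  ∀ l : List Q.A, l ∈ I →
    ¬ (l.map Sum.inl).IsInfix w ∧ ¬ (invWord (l.map Sum.inl)).IsInfix w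

/-- A band: a cyclic string all of whose powers are strings, and which is not a proper
power of another string. -/
def IsBand (w : List (Letter Q)) : Prop :=
  IsString Q I w ∧
  w.getLast?.map Letter.src = w.head?.map Letter.tgt ∧
  (∀ m : ℕ, 1 ≤ m → IsString Q I (List.flatten (List.replicate m w))) ∧
  ¬ ∃ (u : List (Letter Q)) (m : ℕ), 2 ≤ m ∧ w = List.flatten (List.replicate m u)

/-- There exists a band for the bound quiver `(Q, I)`. -/
def HasBand : Prop := ∃ w : List (Letter Q), IsBand Q I w

end Strings

/-! ## Radical, irreducible morphisms and almost split sequences in subcategories -/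

section Irr

variable (K : Type) [Field K] (Λ : Type) [Ring Λ] [Algebra K Λ]

/-- The subcategory (given as a set of objects) of finitely generated Gorenstein projective
modules, `Gproj Λ`. -/
def gprojClass : Set (ModuleCat.{0} Λ) :=
  {M | Module.Finite Λ M ∧ IsGorensteinProjective Λ M}

/-- The subcategory (given as a set of objects) of finitely generated projective modules,
`proj Λ`. -/
def projClass : Set (ModuleCat.{0} Λ) :=
  {M | Module.Finite Λ M ∧ Module.Projective Λ M}

variable {Λ}
variable {X Y : Type} [AddCommGroup X] [Module Λ X] [AddCommGroup Y] [Module Λ Y]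

/-- A linear map is a section if it has a left inverse. -/
def IsSectionMap (f : X →ₗ[Λ] Y) : Prop := ∃ r : Y →ₗ[Λ] X, r ∘ₗ f = LinearMap.id

/-- A linear map is a retraction if it has a right inverse. -/
def IsRetractionMap (f : X →ₗ[Λ] Y) : Prop := ∃ s : Y →ₗ[Λ] X, f ∘ₗ s = LinearMap.id

/-- A morphism between objects of a full subcategory `D` of `mod Λ` is irreducible in `D`
if it is neither a section nor a retraction, and in any factorization through an object
of `D` the first factor is a section or the second factor is a retraction. -/
def IsIrreducibleIn (D : Set (ModuleCat.{0} Λ)) (f : X →ₗ[Λ] Y) : Prop :=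
  ¬ IsSectionMap f ∧ ¬ IsRetractionMap f ∧
  ∀ Z ∈ D, ∀ (h : X →ₗ[Λ] ↥Z) (g : ↥Z →ₗ[Λ] Y),
    f = g ∘ₗ h → IsSectionMap h ∨ IsRetractionMap g

/-- Membership in the radical of the category of `Λ`-modules:
`f ∈ rad(X,Y)` iff `1 - g∘f` is invertible for every `g : Y → X`. -/
def InRad (f : X →ₗ[Λ] Y) : Prop :=
  ∀ g : Y →ₗ[Λ] X, IsUnit ((1 : Module.End Λ X) - (g ∘ₗ f : Module.End Λ X))

variable (X Y)
variable [Module K Y] [IsScalarTower K Λ Y]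

/-- The radical `rad(X,Y)` as a `K`-subspace of `Hom_Λ(X,Y)`. -/
noncomputable def radHom : Submodule K (X →ₗ[Λ] Y) :=
  Submodule.span K {f | InRad f}

/-- `rad²_D(X,Y)`: the subspace of `Hom_Λ(X,Y)` spanned by composites of two radical
morphisms passing through an object of the subcategory `D`. -/
noncomputable def rad2Hom (D : Set (ModuleCat.{0} Λ)) : Submodule K (X →ₗ[Λ] Y) :=
  Submodule.span K {h | ∃ Z ∈ D, ∃ (f : X →ₗ[Λ] ↥Z) (g : ↥Z →ₗ[Λ] Y),
    InRad f ∧ InRad g ∧ h = g ∘ₗ f}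

/-- `dim_K irr_D(X,Y) = dim_K rad(X,Y)/rad²_D(X,Y)`, the dimension of the space of
irreducible morphisms from `X` to `Y` in the subcategory `D`. -/
noncomputable def irrDim (D : Set (ModuleCat.{0} Λ)) : ℕ :=
  Module.finrank K
    (↥(radHom K X Y) ⧸ ((rad2Hom K X Y D).comap (radHom K X Y).subtype))

variable {X Y}

/-- `0 → L →ᵃ M →ᵇ N → 0` is an almost split (Auslander-Reiten) sequence in the full
subcategory `D`: it is a non-split short exact sequence with indecomposable end terms,
`b` is right almost split in `D` and `a` is left almost split in `D`. -/
def IsAlmostSplitSequenceIn (D : Set (ModuleCat.{0} Λ)) {L M N : Type}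
    [AddCommGroup L] [Module Λ L] [AddCommGroup M] [Module Λ M]
    [AddCommGroup N] [Module Λ N] (a : L →ₗ[Λ] M) (b : M →ₗ[Λ] N) : Prop :=
  Function.Injective a ∧ Function.Surjective b ∧ LinearMap.range a = LinearMap.ker b ∧
  (¬ ∃ s : N →ₗ[Λ] M, b ∘ₗ s = LinearMap.id) ∧
  IsIndecomposableModule Λ L ∧ IsIndecomposableModule Λ N ∧
  (∀ Z ∈ D, ∀ g : ↥Z →ₗ[Λ] N, ¬ IsRetractionMap g → ∃ h : ↥Z →ₗ[Λ] M, b ∘ₗ h = g) ∧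
  (∀ Z ∈ D, ∀ f : L →ₗ[Λ] ↥Z, ¬ IsSectionMap f → ∃ h : M →ₗ[Λ] ↥Z, h ∘ₗ a = f)

end Irr

/-! ## Derived equivalence -/

open CategoryTheory in
/-- Two rings are derived equivalent if there is a triangulated equivalence between the
derived categories of their module categories. -/
def DerivedEquivalent (A B : Type) [Ring A] [Ring B] : Prop :=
  letI : HasDerivedCategory (ModuleCat.{0} A) := HasDerivedCategory.standard _
  letI : HasDerivedCategory (ModuleCat.{0} B) := HasDerivedCategory.standard _
  ∃ (e : DerivedCategory (ModuleCat.{0} A) ≌ DerivedCategory (ModuleCat.{0} B))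
    (hc : e.functor.CommShift ℤ), letI := hc; e.functor.IsTriangulated

/-! ## Cluster-tilted algebras of type `A_n` -/

section Cluster

variable (Q : QuiverData)

/-- An oriented 3-cycle (triangle) `a, b, c` with pairwise distinct vertices. -/
def IsTriangle (a b c : Q.A) : Prop :=
  Q.t a = Q.s b ∧ Q.t b = Q.s c ∧ Q.t c = Q.s a ∧
  Q.s a ≠ Q.s b ∧ Q.s b ≠ Q.s c ∧ Q.s a ≠ Q.s c

/-- An arrow lies on a triangle. -/
def OnTriangle (a : Q.A) : Prop :=
  ∃ b c : Q.A, IsTriangle Q a b c ∨ IsTriangle Q b a c ∨ IsTriangle Q b c a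

/-- Two arrows belong to a common triangle (consecutively). -/
def InCommonTriangle (a b : Q.A) : Prop :=
  ∃ c : Q.A, IsTriangle Q a b c ∨ IsTriangle Q b a c

/-- The set of neighbours of a vertex in the underlying graph of the quiver. -/
def neighbors (v : Q.V) : Set Q.V :=
  {w | w ≠ v ∧ ∃ a : Q.A, (Q.s a = v ∧ Q.t a = w) ∨ (Q.s a = w ∧ Q.t a = v)}

/-- The set of arrows adjacent to a vertex. -/
def adjArrows (v : Q.V) : Set Q.A := {a | Q.s a = v ∨ Q.t a = v}

/-- A non-trivial cycle in the underlying graph of `Q`: a nonempty, cyclically composable,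
cyclically reduced closed walk through pairwise distinct vertices. -/
def IsCycleWalk (w : List (Letter Q)) : Prop :=
  w ≠ [] ∧
  w.Chain' (fun c d => c.tgt = d.src) ∧
  w.getLast?.map Letter.tgt = w.head?.map Letter.src ∧
  w.Chain' (fun c d => d ≠ c.inv) ∧
  w.head? ≠ w.getLast?.map Letter.inv ∧
  (w.map Letter.src).Nodup

/-- A walk is oriented if all its letters are direct arrows or all are inverse arrows. -/
def IsOrientedWalk (w : List (Letter Q)) : Prop :=
  (∀ c ∈ w, ∃ a : Q.A, c = Sum.inl a) ∨ (∀ c ∈ w, ∃ a : Q.A, c = Sum.inr a)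

/-- The quivers of cluster-tilted algebras of type `A`: all non-trivial cycles are oriented
of length 3, each vertex has at most four neighbours, a vertex with four neighbours has two
adjacent arrows in one 3-cycle and the other two in another, and a vertex with exactly
three neighbours has two adjacent arrows in a 3-cycle and the third in no 3-cycle. -/
structure IsClusterQuiverA (Q : QuiverData) : Prop where
  cycles : ∀ w : List (Letter Q), IsCycleWalk Q w → w.length = 3 ∧ IsOrientedWalk Q w
  nbhd_le_four : ∀ v : Q.V, (neighbors Q v).ncard ≤ 4
  four_nbhd : ∀ v : Q.V, (neighbors Q v).ncard = 4 → ∃ a₁ a₂ a₃ a₄ : Q.A,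
    adjArrows Q v = {a₁, a₂, a₃, a₄} ∧
    a₁ ≠ a₂ ∧ a₁ ≠ a₃ ∧ a₁ ≠ a₄ ∧ a₂ ≠ a₃ ∧ a₂ ≠ a₄ ∧ a₃ ≠ a₄ ∧
    ∃ c c' : Q.A, (IsTriangle Q a₁ a₂ c ∨ IsTriangle Q a₂ a₁ c) ∧
      (IsTriangle Q a₃ a₄ c' ∨ IsTriangle Q a₄ a₃ c') ∧
      ({a₁, a₂, c} : Set Q.A) ≠ {a₃, a₄, c'}
  three_nbhd : ∀ v : Q.V, (neighbors Q v).ncard = 3 → ∃ a₁ a₂ a₃ : Q.A,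
    adjArrows Q v = {a₁, a₂, a₃} ∧ a₁ ≠ a₂ ∧ a₁ ≠ a₃ ∧ a₂ ≠ a₃ ∧
    InCommonTriangle Q a₁ a₂ ∧ ¬ OnTriangle Q a₃

/-- The relations of a cluster-tilted algebra of type `A`: all paths of length two lying on
a 3-cycle. -/
def clusterRels : Set (List Q.A) :=
  {p | ∃ a b c : Q.A, IsTriangle Q a b c ∧ p = [b, a]}

/-- The number of triangles (3-cycles) of the quiver. -/
noncomputable def triangleCount : ℕ :=
  Set.ncard {S : Set Q.A | ∃ a b c : Q.A, IsTriangle Q a b c ∧ S = {a, b, c}}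

/-- The number of lines of the quiver: arrows lying on no triangle. -/
noncomputable def lineCount : ℕ := Set.ncard {a : Q.A | ¬ OnTriangle Q a}

end Cluster

/-! ## Cartan matrices, schurian algebras and Coxeter polynomials -/

section Cartan

variable (K : Type) [Field K] (Q : QuiverData) (I : Set (List Q.A))

set_option maxSynthPendingDepth 2 in
/-- The Cartan matrix entry `dim_K Hom(P_w, P_v)` of the bound quiver algebra. -/
noncomputable def cartanEntry (v w : Q.V) : ℕ :=
  Module.finrank K (↥(Pmod K Q I w) →ₗ[BoundQuiverAlgebra K Q I] ↥(Pmod K Q I v))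

/-- A bound quiver algebra is schurian if all entries of its Cartan matrix are `0` or `1`. -/
def IsSchurianAlg : Prop := ∀ v w : Q.V, cartanEntry K Q I v w ≤ 1

/-- The Cartan matrix of the bound quiver algebra, over `ℚ`. -/
noncomputable def cartanMatrix : Matrix Q.V Q.V ℚ :=
  Matrix.of fun v w => (cartanEntry K Q I v w : ℚ)

/-- The Coxeter polynomial: the characteristic polynomial of the asymmetry matrix
`-Cᵀ C⁻¹` of the Cartan matrix. -/
noncomputable def coxeterPolynomial : Polynomial ℚ :=
  letI := Fintype.ofFinite Q.V
  letI := Classical.decEq Q.V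
  Matrix.charpoly (-(cartanMatrix K Q I).transpose * (cartanMatrix K Q I)⁻¹)

end Cartan

/-! ## Hall numbers, Hall polynomials and Hall algebras -/

section Hall

open TensorProduct

/-- The Hall number `F^L_{MN}`: the number of submodules `U ⊆ L` with `U ≅ N` and
`L/U ≅ M`. -/
noncomputable def hallNum (Λ : Type) [Ring Λ] (L M N : Type) [AddCommGroup L] [Module Λ L]
    [AddCommGroup M] [Module Λ M] [AddCommGroup N] [Module Λ N] : ℕ :=
  Set.ncard {U : Submodule Λ L | Nonempty (↥U ≃ₗ[Λ] N) ∧ Nonempty ((L ⧸ U) ≃ₗ[Λ] M)}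

/-- The type of finitely generated modules. -/
def FGMod (Λ : Type) [Ring Λ] := {M : ModuleCat.{0} Λ // Module.Finite Λ M}

instance fgModSetoid (Λ : Type) [Ring Λ] : Setoid (FGMod Λ) where
  r M N := Nonempty (↥M.1 ≃ₗ[Λ] ↥N.1)
  iseqv := ⟨fun _ => ⟨LinearEquiv.refl _ _⟩, fun ⟨e⟩ => ⟨e.symm⟩,
    fun ⟨e⟩ ⟨f⟩ => ⟨e.trans f⟩⟩

/-- Isomorphism classes of finitely generated modules. -/
def FGClass (Λ : Type) [Ring Λ] := Quotient (fgModSetoid Λ)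

/-- The Hall number attached to three isomorphism classes of finitely generated modules. -/
noncomputable def hallNumCls (Λ : Type) [Ring Λ] (L M N : FGClass Λ) : ℕ :=
  hallNum Λ L.out.1 M.out.1 N.out.1

/-- The multiplication of the rational Ringel-Hall algebra, on coefficient functions:
`(f * g)(L) = ∑_{M,N} f(M) g(N) F^L_{MN}`. -/
noncomputable def hallMul (Λ : Type) [Ring Λ] (f g : FGClass Λ → ℚ) : FGClass Λ → ℚ :=
  fun L => ∑ᶠ M : FGClass Λ, ∑ᶠ N : FGClass Λ, f M * g N * (hallNumCls Λ L M N : ℚ)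

/-- The class of the zero module. -/
noncomputable def zeroFGClass (Λ : Type) [Ring Λ] : FGClass Λ :=
  Quotient.mk _ (⟨ModuleCat.of Λ PUnit, inferInstance⟩ : FGMod Λ)

/-- The basis vector `u_{[X]}` of the Ringel-Hall algebra. -/
noncomputable def hallDelta (Λ : Type) [Ring Λ] (X : FGClass Λ) : FGClass Λ → ℚ := by
  classical exact fun L => if L = X then 1 else 0

/-- The rational composition algebra inside the rational Ringel-Hall algebra: the smallest
subset containing the unit `u_{[0]}` and the classes of the simple modules which is closed
under addition, rational scalar multiples and the Hall multiplication. -/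
inductive InCompositionAlgebra (Λ : Type) [Ring Λ] : (FGClass Λ → ℚ) → Prop
  | one : InCompositionAlgebra Λ (hallDelta Λ (zeroFGClass Λ))
  | simple (S : ModuleCat.{0} Λ) (hfin : Module.Finite Λ S) (hs : IsSimpleModule Λ S) :
      InCompositionAlgebra Λ (hallDelta Λ (Quotient.mk _ (⟨S, hfin⟩ : FGMod Λ)))
  | add (f g : FGClass Λ → ℚ) : InCompositionAlgebra Λ f → InCompositionAlgebra Λ g →
      InCompositionAlgebra Λ (f + g)
  | smul (q : ℚ) (f : FGClass Λ → ℚ) : InCompositionAlgebra Λ f →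
      InCompositionAlgebra Λ (q • f)
  | mul (f g : FGClass Λ → ℚ) : InCompositionAlgebra Λ f → InCompositionAlgebra Λ g →
      InCompositionAlgebra Λ (hallMul Λ f g)

/-! ### Base change of modules along a field extension -/

section BaseChange

variable (K : Type) [Field K] (Λ : Type) [Ring Λ] [Algebra K Λ]
variable (E : Type) [Field E] [Algebra K E]
variable (M : Type) [AddCommGroup M] [Module Λ M] [Module K M] [IsScalarTower K Λ M]

set_option maxHeartbeats 1000000 in
/-- `f ↦ 1 ⊗ f` on endomorphisms, as an algebra map. -/
noncomputable def lTensorEndAlgHom :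
    Module.End K M →ₐ[K] Module.End K (E ⊗[K] M) where
  toFun f := LinearMap.lTensor E f
  map_one' := by
    simp only [Module.End.one_eq_id]
    exact LinearMap.lTensor_id E M
  map_mul' f g := by
    simp only [Module.End.mul_eq_comp]
    exact LinearMap.lTensor_comp E f g
  map_zero' := LinearMap.lTensor_zero E
  map_add' f g := LinearMap.lTensor_add E f g
  commutes' k := by
    simp only [Module.algebraMap_end_eq_smul_id]
    rw [LinearMap.lTensor_smul, LinearMap.lTensor_id]

/-- The action of `Λ` on `E ⊗[K] M` through the right factor, as an algebra map to
endomorphisms. -/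
noncomputable def extScalarsAlgHom : Λ →ₐ[K] Module.End K (E ⊗[K] M) :=
  (lTensorEndAlgHom K E M).comp (Algebra.lsmul K K M)

set_option maxHeartbeats 1000000 in
theorem extScalarsAlgHom_tmul (l : Λ) (e : E) (m : M) :
    extScalarsAlgHom K Λ E M l (e ⊗ₜ[K] m) = e ⊗ₜ[K] (l • m) := by
  have h1 : extScalarsAlgHom K Λ E M l =
      LinearMap.lTensor E ((Algebra.lsmul K K M : Λ →ₐ[K] Module.End K M) l) := rfl
  rw [h1, LinearMap.lTensor_tmul]
  rfl

/-- The `Λ`-module structure on `E ⊗[K] M`. -/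
noncomputable def extModuleRight : Module Λ (E ⊗[K] M) :=
  Module.compHom _ (extScalarsAlgHom K Λ E M).toRingHom

set_option maxHeartbeats 1000000 in
/-- The `E ⊗[K] Λ`-module structure on `E ⊗[K] M`. -/
noncomputable def extModule : Module (E ⊗[K] Λ) (E ⊗[K] M) := by
  letI : Module Λ (E ⊗[K] M) := extModuleRight K Λ E M
  haveI : IsScalarTower K Λ (E ⊗[K] M) := ⟨fun k l x => by
    show (extScalarsAlgHom K Λ E M (k • l)) x = k • (extScalarsAlgHom K Λ E M l) x
    rw [Algebra.smul_def, map_mul, AlgHom.commutes]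
    rfl⟩
  haveI : SMulCommClass E Λ (E ⊗[K] M) := ⟨fun e l x => by
    show e • (extScalarsAlgHom K Λ E M l) x = (extScalarsAlgHom K Λ E M l) (e • x)
    induction x using TensorProduct.induction_on with
    | zero => simp
    | tmul e' m =>
        rw [TensorProduct.smul_tmul', extScalarsAlgHom_tmul, extScalarsAlgHom_tmul,
          TensorProduct.smul_tmul']
    | add x y hx hy => rw [map_add, smul_add, hx, hy, smul_add, map_add]⟩
  exact TensorProduct.Algebra.module

end BaseChange

/-- The Hall number `F^{L^E}_{M^E N^E}` of the base-changed modules over the base-changed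
algebra `Λ^E = E ⊗_K Λ`. -/
noncomputable def hallNumExt (K : Type) [Field K] (Λ : Type) [Ring Λ] [Algebra K Λ]
    (E : Type) [Field E] [Algebra K E] (L M N : Type)
    [AddCommGroup L] [Module Λ L] [AddCommGroup M] [Module Λ M]
    [AddCommGroup N] [Module Λ N] : ℕ :=
  letI : AddCommMonoid (RestrictScalars K Λ L) := AddCommGroup.toAddCommMonoid
  letI : Module Λ (RestrictScalars K Λ L) := RestrictScalars.moduleOrig K Λ L
  letI : Module K (RestrictScalars K Λ L) := RestrictScalars.module K Λ L
  letI : IsScalarTower K Λ (RestrictScalars K Λ L) := RestrictScalars.isScalarTower K Λ L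
  letI : AddCommMonoid (RestrictScalars K Λ M) := AddCommGroup.toAddCommMonoid
  letI : Module Λ (RestrictScalars K Λ M) := RestrictScalars.moduleOrig K Λ M
  letI : Module K (RestrictScalars K Λ M) := RestrictScalars.module K Λ M
  letI : IsScalarTower K Λ (RestrictScalars K Λ M) := RestrictScalars.isScalarTower K Λ M
  letI : AddCommMonoid (RestrictScalars K Λ N) := AddCommGroup.toAddCommMonoid
  letI : Module Λ (RestrictScalars K Λ N) := RestrictScalars.moduleOrig K Λ N
  letI : Module K (RestrictScalars K Λ N) := RestrictScalars.module K Λ N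
  letI : IsScalarTower K Λ (RestrictScalars K Λ N) := RestrictScalars.isScalarTower K Λ N
  letI := extModule K Λ E (RestrictScalars K Λ L)
  letI := extModule K Λ E (RestrictScalars K Λ M)
  letI := extModule K Λ E (RestrictScalars K Λ N)
  hallNum (E ⊗[K] Λ) (E ⊗[K] RestrictScalars K Λ L) (E ⊗[K] RestrictScalars K Λ M)
    (E ⊗[K] RestrictScalars K Λ N)

/-- The Jacobson radical of a ring, as a set. -/
def jacobsonSet (A : Type) [Ring A] : Set A := {x | ∀ y : A, IsUnit (1 - y * x)}

/-- The quotient of a ring by its Jacobson radical. -/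
abbrev ResidueRing (A : Type) [Ring A] : Type :=
  RingQuot (fun x y : A => x - y ∈ jacobsonSet A)

/-- A finite field extension `E/K` is conservative for `Λ` if for every indecomposable
finitely generated module `M`, `(End(M)/rad End(M)) ⊗_K E` is a field. -/
def IsConservative (K : Type) [Field K] (Λ : Type) [Ring Λ] [Algebra K Λ]
    (E : Type) [Field E] [Algebra K E] : Prop :=
  ∀ M : ModuleCat.{0} Λ, Module.Finite Λ M → IsIndecomposableModule Λ M →
    letI : AddCommMonoid (RestrictScalars K Λ M) := AddCommGroup.toAddCommMonoid
    letI : Module Λ (RestrictScalars K Λ M) := RestrictScalars.moduleOrig K Λ M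
    letI : Module K (RestrictScalars K Λ M) := RestrictScalars.module K Λ M
    letI : IsScalarTower K Λ (RestrictScalars K Λ M) := RestrictScalars.isScalarTower K Λ M
    IsField ((ResidueRing (Module.End Λ (RestrictScalars K Λ M))) ⊗[K] E)

/-- `Λ` has Hall polynomials: for all finitely generated modules `L, M, N` there is an
integer polynomial `φ` with `φ(|E|) = F^{L^E}_{M^E N^E}` for every finite field extension
`E` of `K` which is conservative for `Λ`. -/
def HasHallPolynomials (K : Type) [Field K] (Λ : Type) [Ring Λ] [Algebra K Λ] : Prop :=
  ∀ L M N : ModuleCat.{0} Λ, Module.Finite Λ L → Module.Finite Λ M → Module.Finite Λ N →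
    ∃ φ : Polynomial ℤ,
      ∀ (E : Type) [Field E] [Algebra K E] [FiniteDimensional K E],
        IsConservative K Λ E →
        Polynomial.eval (Nat.card E : ℤ) φ = (hallNumExt K Λ E L M N : ℤ)

end Hall

section ArrowHom

variable (K : Type) [CommRing K] (Q : QuiverData) (I : Set (List Q.A))

/-- The morphism `P_{t(α)} → P_{s(α)}` between indecomposable projective modules induced by
an arrow `α` (given by right multiplication by `α`). -/
noncomputable def arrowHom (a : Q.A) :
    ↥(Pmod K Q I (Q.t a)) →ₗ[BoundQuiverAlgebra K Q I] ↥(Pmod K Q I (Q.s a)) :=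
  (LinearMap.toSpanSingleton (BoundQuiverAlgebra K Q I) (BoundQuiverAlgebra K Q I)
    (arrEl K Q I a)).restrict (fun x _ => Rmod_le_Pmod K Q I a ⟨x, rfl⟩)

end ArrowHom

/-- `χ_M(x)`: the characteristic polynomial of the asymmetry matrix `-Mᵀ M⁻¹` of a square
matrix `M` over `ℚ`. -/
noncomputable def asymCharpoly {n : Type} [Fintype n] [DecidableEq n]
    (M : Matrix n n ℚ) : Polynomial ℚ :=
  Matrix.charpoly (-M.transpose * M⁻¹)

/-! For an arrow `γ` let `M(γ)` be the string module `K → K` supported at `s γ` and `t γ`.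
It is indecomposable, since every nonzero submodule contains the vector at `t γ`, and its
dimension vector is `e_{s γ} + e_{t γ}`. If `β : t α → s α`, then `M(α)` and `M(β)` have
the same dimension vector, yet they are not isomorphic: `α ≠ β` as `Q` has no loops, so `α`
acts nontrivially on `M(α)` and by zero on `M(β)`. -/

theorem isIndecomposableModule_of_forall_mem {R M : Type} [Ring R] [AddCommGroup M]
    [Module R M] (m : M) (hm : m ≠ 0) (h : ∀ W : Submodule R M, W ≠ ⊥ → m ∈ W) :
    IsIndecomposableModule R M := by
  refine ⟨⟨m, 0, hm⟩, fun e he => ?_⟩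
  have hidem : ∀ x, e (e x) = e x := LinearMap.congr_fun he
  by_cases hker : LinearMap.ker e = ⊥
  · exact Or.inr (LinearMap.ext fun x => LinearMap.ker_eq_bot.mp hker (hidem x))
  by_cases hrange : LinearMap.range e = ⊥
  · exact Or.inl (LinearMap.range_eq_bot.mp hrange)
  obtain ⟨y, rfl⟩ := h _ hrange
  have hey : e (e y) = 0 := h _ hker
  exact absurd (hidem y ▸ hey) hm

theorem isEmpty_linearEquiv_of_smul {R M N : Type*} [Ring R] [AddCommGroup M] [Module R M]
    [AddCommGroup N] [Module R N] {a : R} (hM : ∃ m : M, a • m ≠ 0)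
    (hN : ∀ n : N, a • n = 0) : IsEmpty (M ≃ₗ[R] N) :=
  ⟨fun e => hM.elim fun m hm => hm (e.map_eq_zero_iff.mp (by rw [e.map_smul, hN]))⟩

theorem dimVecEntry_eq_finrank_range (K : Type) [CommRing K] (Q : QuiverData)
    (I : Set (List Q.A)) (M : Type) [AddCommGroup M] [Module (BoundQuiverAlgebra K Q I) M]
    [Module K M] [IsScalarTower K (BoundQuiverAlgebra K Q I) M] (v : Q.V) :
    dimVecEntry K Q I M v = Module.finrank K
      (LinearMap.range (DistribSMul.toLinearMap K M (vertEl K Q I v))) := by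
  let e : RestrictScalars K (BoundQuiverAlgebra K Q I) M ≃ₗ[K] M :=
    { RestrictScalars.addEquiv K _ M with
      map_smul' := fun k x =>
        algebraMap_smul (BoundQuiverAlgebra K Q I) k (RestrictScalars.addEquiv K _ M x) }
  have hconj : DistribSMul.toLinearMap K M (vertEl K Q I v) =
      e.toLinearMap ∘ₗ RestrictScalars.lsmul K _ M (vertEl K Q I v) ∘ₗ e.symm.toLinearMap :=
    rfl
  rw [dimVecEntry, hconj, LinearMap.range_comp,
    LinearMap.range_comp_of_range_eq_top _ e.symm.range, e.finrank_map_eq]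

section MatrixModule

variable {K : Type} [Field K] {A : Type} [Ring A] [Algebra K A] {n : Type} [Fintype n]
  [DecidableEq n]

def MatrixModule (_ρ : A →ₐ[K] Matrix n n K) : Type := n → K

variable (ρ : A →ₐ[K] Matrix n n K)

instance : AddCommGroup (MatrixModule ρ) := Pi.addCommGroup

instance : Module K (MatrixModule ρ) := Pi.module _ _ _

instance : Module A (MatrixModule ρ) :=
  Module.compHom (n → K) (Matrix.toLinAlgEquiv'.toRingHom.comp ρ.toRingHom)

theorem MatrixModule.smul_apply (k : K) (v : MatrixModule ρ) (i : n) : (k • v) i = k * v i :=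
  rfl

theorem MatrixModule.smul_def (a : A) (v : MatrixModule ρ) : a • v = (ρ a).mulVec v := rfl

instance : IsScalarTower K A (MatrixModule ρ) :=
  ⟨fun k a v => by
    simp only [MatrixModule.smul_def, map_smul]
    exact Matrix.smul_mulVec k (ρ a) v⟩

instance : Module.Finite K (MatrixModule ρ) := inferInstanceAs (Module.Finite K (n → K))

instance : Module.Finite A (MatrixModule ρ) :=
  Module.Finite.of_restrictScalars_finite K A (MatrixModule ρ)

theorem MatrixModule.toLinearMap_eq (a : A) :
    DistribSMul.toLinearMap K (MatrixModule ρ) a = (ρ a).mulVecLin := rfl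

end MatrixModule

theorem dimVecEntry_matrixModule {K : Type} [Field K] {Q : QuiverData} {I : Set (List Q.A)}
    {n : Type} [Fintype n] [DecidableEq n] (ρ : BoundQuiverAlgebra K Q I →ₐ[K] Matrix n n K)
    (v : Q.V) : dimVecEntry K Q I (MatrixModule ρ) v = (ρ (vertEl K Q I v)).rank := by
  rw [dimVecEntry_eq_finrank_range, MatrixModule.toLinearMap_eq, Matrix.rank]
  rfl

section ArrowModule

variable (K : Type) [Field K] {Q : QuiverData} [DecidableEq Q.V] [DecidableEq Q.A]

/-- The string module `M(γ)` of an arrow, on generators: `K` at `s γ` and at `t γ`, joined by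
the identity along `γ`. -/
def arrowRepGen (γ : Q.A) : Q.V ⊕ Q.A → Matrix (Fin 2) (Fin 2) K
  | Sum.inl v => Matrix.diagonal fun i => if ![Q.s γ, Q.t γ] i = v then 1 else 0
  | Sum.inr a => if a = γ then Matrix.single 1 0 1 else 0

theorem arrowRepGen_inr_mul_inr (γ a b : Q.A) :
    arrowRepGen K γ (Sum.inr a) * arrowRepGen K γ (Sum.inr b) = 0 := by
  simp only [arrowRepGen]
  split_ifs <;> simp [Matrix.single_mul_single_of_ne]

theorem arrowRepGen_rel (I : Set (List Q.A)) (γ : Q.A) (hI : ∀ p ∈ I, 2 ≤ p.length)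
    ⦃x y : FreeAlgebra K (Q.V ⊕ Q.A)⦄ (h : BQRel K Q I x y) :
    FreeAlgebra.lift K (arrowRepGen K γ) x = FreeAlgebra.lift K (arrowRepGen K γ) y := by
  induction h with
  | vert_mul_self v =>
    simp only [map_mul, FreeAlgebra.lift_ι_apply, arrowRepGen, Matrix.diagonal_mul_diagonal]
    congr 1
    funext i
    split_ifs <;> simp
  | vert_mul_vert v w hvw =>
    simp only [map_mul, map_zero, FreeAlgebra.lift_ι_apply, arrowRepGen,
      Matrix.diagonal_mul_diagonal]
    rw [← Matrix.diagonal_zero]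
    congr 1
    funext i
    split_ifs <;> simp_all
  | sum_vert =>
    have := Fintype.ofFinite Q.V
    rw [finsum_eq_sum_of_fintype, map_sum, map_one]
    ext i j
    simp [arrowRepGen, Matrix.sum_apply, Matrix.diagonal_apply, Matrix.one_apply]
  | arr_tgt a =>
    simp only [map_mul, FreeAlgebra.lift_ι_apply, arrowRepGen]
    split_ifs with ha
    · ext i j
      fin_cases i <;> simp [ha, Matrix.diagonal_mul, Matrix.single_apply]
    · simp
  | arr_src a =>
    simp only [map_mul, FreeAlgebra.lift_ι_apply, arrowRepGen]
    split_ifs with ha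
    · ext i j
      fin_cases j <;> simp [ha, Matrix.mul_diagonal, Matrix.single_apply]
    · simp
  | rel p hp =>
    obtain ⟨a, b, l, rfl⟩ : ∃ a b l, p = a :: b :: l := by
      match p, hI p hp with
      | a :: b :: l, _ => exact ⟨a, b, l, rfl⟩
    simp only [List.map_cons, List.prod_cons, map_mul, map_zero, FreeAlgebra.lift_ι_apply,
      ← mul_assoc, arrowRepGen_inr_mul_inr, zero_mul]

variable (I : Set (List Q.A)) (γ : Q.A) (hI : ∀ p ∈ I, 2 ≤ p.length)

def arrowRep : BoundQuiverAlgebra K Q I →ₐ[K] Matrix (Fin 2) (Fin 2) K :=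
  RingQuot.liftAlgHom K ⟨FreeAlgebra.lift K (arrowRepGen K γ), arrowRepGen_rel K I γ hI⟩

theorem arrowRep_vertEl (v : Q.V) :
    arrowRep K I γ hI (vertEl K Q I v) = arrowRepGen K γ (Sum.inl v) := by
  rw [arrowRep, vertEl, RingQuot.liftAlgHom_mkAlgHom_apply, FreeAlgebra.lift_ι_apply]

theorem arrowRep_arrEl (a : Q.A) :
    arrowRep K I γ hI (arrEl K Q I a) = arrowRepGen K γ (Sum.inr a) := by
  rw [arrowRep, arrEl, RingQuot.liftAlgHom_mkAlgHom_apply, FreeAlgebra.lift_ι_apply]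

theorem arrEl_smul_arrowModule_self (v : MatrixModule (arrowRep K I γ hI)) :
    arrEl K Q I γ • v = Pi.single 1 (v 0) := by
  rw [MatrixModule.smul_def, arrowRep_arrEl, arrowRepGen, if_pos rfl]
  funext i
  fin_cases i <;> simp [Matrix.mulVec, dotProduct, Matrix.single_apply]

theorem arrEl_smul_arrowModule_of_ne {a : Q.A} (ha : a ≠ γ)
    (v : MatrixModule (arrowRep K I γ hI)) : arrEl K Q I a • v = 0 := by
  rw [MatrixModule.smul_def, arrowRep_arrEl, arrowRepGen, if_neg ha]
  exact Matrix.zero_mulVec v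

theorem dimVec_arrowModule :
    dimVec K Q I (MatrixModule (arrowRep K I γ hI)) =
      Pi.single (Q.s γ) 1 + Pi.single (Q.t γ) 1 := by
  classical
  funext v
  rw [dimVec, dimVecEntry_matrixModule, arrowRep_vertEl, arrowRepGen, Matrix.rank_diagonal,
    Fintype.card_subtype, Finset.card_filter, Fin.sum_univ_two]
  simp [Pi.single_apply, eq_comm]

theorem isIndecomposableModule_arrowModule :
    IsIndecomposableModule (BoundQuiverAlgebra K Q I) (MatrixModule (arrowRep K I γ hI)) := by
  refine isIndecomposableModule_of_forall_mem (Pi.single 1 1 : Fin 2 → K)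
    (Pi.single_ne_zero_iff.mpr one_ne_zero) fun W hW => ?_
  obtain ⟨w, hwW, hw⟩ := W.ne_bot_iff.mp hW
  by_cases h0 : w 0 = 0
  · have h1 : w 1 ≠ 0 := fun h1 => hw (funext fun i => by fin_cases i <;> assumption)
    have key : (w 1)⁻¹ • w = (Pi.single 1 1 : Fin 2 → K) := by
      funext i
      fin_cases i <;> simp [MatrixModule.smul_apply, h0, h1]
    exact key ▸ W.smul_of_tower_mem _ hwW
  · have key : (w 0)⁻¹ • arrEl K Q I γ • w = (Pi.single 1 1 : Fin 2 → K) := by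
      rw [arrEl_smul_arrowModule_self]
      refine (Pi.single_smul' (1 : Fin 2) (w 0)⁻¹ (w 0)).symm.trans ?_
      rw [smul_eq_mul, inv_mul_cancel₀ h0]
    exact key ▸ W.smul_of_tower_mem _ (W.smul_of_tower_mem _ hwW)

end ArrowModule

theorem gentle_no_two_cycle_of_detByDimVec_general (K : Type) [Field K]
    (Q : QuiverData) (I : Set (List Q.A)) (hgentle : IsGentle Q I)
    (hnoloop : ∀ a : Q.A, Q.s a ≠ Q.t a)
    (hdet : DetByDimVec K Q I) :
    ∀ α β : Q.A, ¬ (Q.s β = Q.t α ∧ Q.t β = Q.s α) := by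
  classical
  rintro α β ⟨hsβ, htβ⟩
  have hI : ∀ p ∈ I, 2 ≤ p.length := fun p hp => (hgentle.rel_length_two p hp).1.ge
  have hαβ : α ≠ β := fun h => hnoloop α (by rw [h, hsβ, h])
  have hdim : dimVec K Q I (MatrixModule (arrowRep K I α hI)) =
      dimVec K Q I (MatrixModule (arrowRep K I β hI)) := by
    rw [dimVec_arrowModule, dimVec_arrowModule, hsβ, htβ, add_comm]
  obtain ⟨e⟩ := hdet (.of _ (MatrixModule (arrowRep K I α hI)))
    (.of _ (MatrixModule (arrowRep K I β hI))) inferInstance inferInstance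
    (isIndecomposableModule_arrowModule K I α hI) (isIndecomposableModule_arrowModule K I β hI)
    hdim
  have hα : ∃ m : MatrixModule (arrowRep K I α hI), arrEl K Q I α • m ≠ 0 :=
    ⟨Pi.single 0 1, (arrEl_smul_arrowModule_self K I α hI _).trans_ne <| by
      rw [Pi.single_eq_same]
      exact Pi.single_ne_zero_iff.mpr one_ne_zero⟩
  exact (isEmpty_linearEquiv_of_smul hα (arrEl_smul_arrowModule_of_ne K I β hI hαβ)).false e

/-- If `Λ = KQ/⟨I⟩` is a gentle algebra whose quiver has no loop and every
indecomposable `Λ`-module is determined by its dimension vector, then `Q` has no oriented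
`2`-cycle. -/
theorem gentle_no_two_cycle_of_detByDimVec (K : Type) [Field K] [IsAlgClosed K]
    (Q : QuiverData) (I : Set (List Q.A)) (hgentle : IsGentle Q I)
    [FiniteDimensional K (BoundQuiverAlgebra K Q I)]
    (hnoloop : ∀ a : Q.A, Q.s a ≠ Q.t a)
    (hdet : DetByDimVec K Q I) :
    ∀ α β : Q.A, ¬ (Q.s β = Q.t α ∧ Q.t β = Q.s α) :=
  gentle_no_two_cycle_of_detByDimVec_general K Q I hgentle hnoloop hdet
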